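/- arXiv:1602.07220 — 5 statements merged into one kernel-verified Lean document; each statement's English description precedes it below -/
import Mathlib

section
/- In a triangle with edge lengths d1, d2, d3, if d1, d2 ≥ 2κ (where κ = cos(π/5)) and d3 ≥ 2.1, and the triangle is nonobtuse, then its area exceeds a_crit = (3/2)·sin(π/5)·κ·(1+κ). -/
/-!
With `x = d₁²`, `y = d₂²`, `z = d₃²`, Heron's formula reads `16 A² = 4xy - (x + y - z)²`, and the
nonobtuse conditions are the triangle inequalities for `x, y, z`. Since `2 cos (π/5)` is the golden
ratio, `x, y ≥ (3 + √5)/2`, while `z ≥ 2.1² = 4.41`. On this region the quartic is smallest at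
`x = y = (3 + √5)/2`, `z = 4.41`, where it is still above `16 a_crit² = (225 + 90√5)/16`.
-/

open Real

/-- Heron's formula for the area of a triangle with side lengths `a`, `b`, `c`. -/
noncomputable def heronArea (a b c : ℝ) : ℝ :=
  Real.sqrt ((a + b + c) / 2 * ((a + b + c) / 2 - a) * ((a + b + c) / 2 - b)
    * ((a + b + c) / 2 - c))

noncomputable def aCrit : ℝ :=
  (3 / 2) * Real.sin (π / 5) * Real.cos (π / 5) * (1 + Real.cos (π / 5))

lemma aCrit_nonneg : 0 ≤ aCrit := by
  have hsin : 0 < sin (π / 5) := sin_pos_of_pos_of_lt_pi (by positivity) (by linarith [pi_pos])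
  rw [aCrit, cos_pi_div_five]
  positivity

lemma aCrit_sq : aCrit ^ 2 = (225 + 90 * √5) / 256 := by
  have h5 : √5 ^ 2 = 5 := sq_sqrt (by norm_num)
  have hsin : sin (π / 5) ^ 2 = (5 - √5) / 8 := by
    rw [sin_sq, cos_pi_div_five]
    linear_combination (-1 / 16 : ℝ) * h5
  rw [aCrit, cos_pi_div_five]
  linear_combination (9 * (5 + 6 * √5 + √5 ^ 2) ^ 2 / 1024) * hsin
    + ((1215 + 81 * √5 - 63 * √5 ^ 2 - 9 * √5 ^ 3) / 8192) * h5

lemma sq_ge_of_two_cos_pi_div_five_le {d : ℝ} (hd : 2 * cos (π / 5) ≤ d) :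
    (3 + √5) / 2 ≤ d ^ 2 := by
  have h5 : √5 ^ 2 = 5 := sq_sqrt (by norm_num)
  rw [cos_pi_div_five] at hd
  calc (3 + √5) / 2 = ((1 + √5) / 2) ^ 2 := by linear_combination (-1 / 4 : ℝ) * h5
    _ ≤ d ^ 2 := pow_le_pow_left₀ (by positivity) (by linarith) 2

lemma heron_product_eq (a b c : ℝ) :
    (a + b + c) / 2 * ((a + b + c) / 2 - a) * ((a + b + c) / 2 - b) * ((a + b + c) / 2 - c)
      = (4 * a ^ 2 * b ^ 2 - (a ^ 2 + b ^ 2 - c ^ 2) ^ 2) / 16 := by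
  ring

lemma lt_heronArea_of_sq_lt {A a b c : ℝ} (hA : 0 ≤ A)
    (h : 16 * A ^ 2 < 4 * a ^ 2 * b ^ 2 - (a ^ 2 + b ^ 2 - c ^ 2) ^ 2) :
    A < heronArea a b c := by
  rw [heronArea, heron_product_eq, lt_sqrt hA]
  linarith

lemma heron_quartic_gt {x y z : ℝ} (hx : (3 + √5) / 2 ≤ x) (hy : (3 + √5) / 2 ≤ y)
    (hz : 4.41 ≤ z) (hxy : z ≤ x + y) (hxz : y ≤ x + z) (hyz : x ≤ y + z) :
    (225 + 90 * √5) / 16 < 4 * x * y - (x + y - z) ^ 2 := by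
  have h5 : √5 ^ 2 = 5 := sq_sqrt (by norm_num)
  have hr : 2.236 ≤ √5 := by nlinarith [sqrt_nonneg 5]
  nlinarith [mul_nonneg (sub_nonneg.2 hxy) (sub_nonneg.2 hz),
    mul_nonneg (by linarith : 0 ≤ x - y + z) (by linarith : 0 ≤ y - x + z),
    mul_nonneg (sub_nonneg.2 hx) (sub_nonneg.2 hy),
    sq_nonneg (x - y), sq_nonneg (x + y - z - 4.41), sq_nonneg (x + y - z)]

theorem long_edge_not_subcritical_general (d1 d2 d3 : ℝ)
    (h1 : 2 * Real.cos (π / 5) ≤ d1) (h2 : 2 * Real.cos (π / 5) ≤ d2)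
    (h3 : (2.1 : ℝ) ≤ d3)
    (hnonobtuse1 : d3 ^ 2 ≤ d1 ^ 2 + d2 ^ 2)
    (hnonobtuse2 : d2 ^ 2 ≤ d1 ^ 2 + d3 ^ 2)
    (hnonobtuse3 : d1 ^ 2 ≤ d2 ^ 2 + d3 ^ 2) :
    heronArea d1 d2 d3 >
      (3 / 2) * Real.sin (π / 5) * Real.cos (π / 5) * (1 + Real.cos (π / 5)) := by
  have hd3 : 4.41 ≤ d3 ^ 2 := by nlinarith
  have hquartic := heron_quartic_gt (sq_ge_of_two_cos_pi_div_five_le h1)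
    (sq_ge_of_two_cos_pi_div_five_le h2) hd3 hnonobtuse1 hnonobtuse2 hnonobtuse3
  refine lt_heronArea_of_sq_lt (A := aCrit) aCrit_nonneg ?_
  rw [aCrit_sq]
  linarith

theorem long_edge_not_subcritical (d1 d2 d3 : ℝ)
    (h1 : 2 * Real.cos (π / 5) ≤ d1) (h2 : 2 * Real.cos (π / 5) ≤ d2)
    (h3 : (2.1 : ℝ) ≤ d3)
    (htri1 : d3 < d1 + d2) (htri2 : d2 < d1 + d3) (htri3 : d1 < d2 + d3)
    (hnonobtuse1 : d3 ^ 2 ≤ d1 ^ 2 + d2 ^ 2)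
    (hnonobtuse2 : d2 ^ 2 ≤ d1 ^ 2 + d3 ^ 2)
    (hnonobtuse3 : d1 ^ 2 ≤ d2 ^ 2 + d3 ^ 2) :
    heronArea d1 d2 d3 >
      (3 / 2) * Real.sin (π / 5) * Real.cos (π / 5) * (1 + Real.cos (π / 5)) :=
  long_edge_not_subcritical_general d1 d2 d3 h1 h2 h3 hnonobtuse1 hnonobtuse2 hnonobtuse3
end

section
/- A nonobtuse triangle whose area is at most a_crit = (3/2)·sin(π/5)·cos(π/5)·(1+cos(π/5)) and whose edge lengths are all at least 2cos(π/5) has every edge of length at most 2.1 < cos(π/5)·√8. -/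
open Real

lemma key_poly (r x y z : ℝ) (hr : r^2 = 5) (hr0 : 0 < r)
    (hx : (3+r)/2 ≤ x) (hy : (3+r)/2 ≤ y) (hz : 441/100 < z)
    (hzxy : z ≤ x + y) (hxyz : x ≤ y + z) (hyxz : y ≤ x + z) :
    (225 + 90*r)/16 < 4*x*y - (x+y-z)^2 := by
  nlinarith [mul_nonneg (by linarith : (0:ℝ) ≤ z - 441/100) (by linarith : (0:ℝ) ≤ x + y - z),
    mul_nonneg (by linarith : (0:ℝ) ≤ z - 441/100) (by nlinarith : (0:ℝ) ≤ x + y - 441/100),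
    mul_nonneg (by linarith : (0:ℝ) ≤ x - (3+r)/2) (by linarith : (0:ℝ) ≤ y + z - x),
    mul_nonneg (by linarith : (0:ℝ) ≤ y - (3+r)/2) (by linarith : (0:ℝ) ≤ x + z - y),
    mul_nonneg (by linarith : (0:ℝ) ≤ x - (3+r)/2) (by linarith : (0:ℝ) ≤ y - (3+r)/2),
    sq_nonneg (r - 9/4), mul_pos hr0 hr0]

set_option maxHeartbeats 1000000 in
theorem subcritical_short_edges (d1 d2 d3 : ℝ)
    (h1 : 2 * Real.cos (π / 5) ≤ d1) (h2 : 2 * Real.cos (π / 5) ≤ d2)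
    (h3 : 2 * Real.cos (π / 5) ≤ d3)
    (htri1 : d3 < d1 + d2) (htri2 : d2 < d1 + d3) (htri3 : d1 < d2 + d3)
    (hnonobtuse1 : d3 ^ 2 ≤ d1 ^ 2 + d2 ^ 2)
    (hnonobtuse2 : d2 ^ 2 ≤ d1 ^ 2 + d3 ^ 2)
    (hnonobtuse3 : d1 ^ 2 ≤ d2 ^ 2 + d3 ^ 2)
    (harea : heronArea d1 d2 d3 ≤
      (3 / 2) * Real.sin (π / 5) * Real.cos (π / 5) * (1 + Real.cos (π / 5))) :
    (d1 ≤ 2.1 ∧ d2 ≤ 2.1 ∧ d3 ≤ 2.1) ∧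
      (2.1 : ℝ) < Real.cos (π / 5) * Real.sqrt 8 := by
  have hr : Real.sqrt 5 ^ 2 = 5 := Real.sq_sqrt (by norm_num)
  have hr0 : (0:ℝ) < Real.sqrt 5 := Real.sqrt_pos.2 (by norm_num)
  set r := Real.sqrt 5 with hrdef
  have hc : Real.cos (π / 5) = (1 + r) / 4 := Real.cos_pi_div_five
  have hrlb : (21/10 : ℝ) < r := by nlinarith
  have hrub : r < 9/4 := by nlinarith
  -- positivity of sides
  have hcpos : (0:ℝ) < 2 * Real.cos (π / 5) := by rw [hc]; linarith
  have hd1 : 0 < d1 := lt_of_lt_of_le hcpos h1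
  have hd2 : 0 < d2 := lt_of_lt_of_le hcpos h2
  have hd3 : 0 < d3 := lt_of_lt_of_le hcpos h3
  -- sin facts
  have hs0 : 0 ≤ Real.sin (π / 5) := by
    apply Real.sin_nonneg_of_nonneg_of_le_pi
    · positivity
    · nlinarith [Real.pi_pos]
  have hs2 : Real.sin (π / 5) ^ 2 = 1 - ((1 + r) / 4) ^ 2 := by
    have := Real.sin_sq_add_cos_sq (π / 5)
    rw [hc] at this; linarith
  set A := (3 / 2) * Real.sin (π / 5) * Real.cos (π / 5) * (1 + Real.cos (π / 5)) with hA
  have hA0 : 0 ≤ A := by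
    rw [hA, hc]
    have : (0:ℝ) ≤ (1 + r) / 4 := by linarith
    positivity
  have hA2 : A ^ 2 = (225 + 90 * r) / 256 := by
    rw [hA, hc]
    linear_combination (9/4*((1+r)/4)^2*(1+(1+r)/4)^2) * hs2 +
      (-(9*r^4 + 126*r^3 + 540*r^2 + 378*r - 2205)/16384) * hr
  -- squares
  have h1' : (1 + r) / 2 ≤ d1 := by rw [hc] at h1; linarith
  have h2' : (1 + r) / 2 ≤ d2 := by rw [hc] at h2; linarith
  have h3' : (1 + r) / 2 ≤ d3 := by rw [hc] at h3; linarith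
  have hq1 : (3 + r) / 2 ≤ d1 ^ 2 := by
    calc (3 + r) / 2 = ((1+r)/2) * ((1+r)/2) := by linear_combination (-1/4 : ℝ) * hr
      _ ≤ d1 * d1 := mul_le_mul h1' h1' (by linarith) hd1.le
      _ = d1 ^ 2 := by ring
  have hq2 : (3 + r) / 2 ≤ d2 ^ 2 := by
    calc (3 + r) / 2 = ((1+r)/2) * ((1+r)/2) := by linear_combination (-1/4 : ℝ) * hr
      _ ≤ d2 * d2 := mul_le_mul h2' h2' (by linarith) hd2.le
      _ = d2 ^ 2 := by ring
  have hq3 : (3 + r) / 2 ≤ d3 ^ 2 := by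
    calc (3 + r) / 2 = ((1+r)/2) * ((1+r)/2) := by linear_combination (-1/4 : ℝ) * hr
      _ ≤ d3 * d3 := mul_le_mul h3' h3' (by linarith) hd3.le
      _ = d3 ^ 2 := by ring
  -- the key conclusion : if any side exceeds 2.1 we contradict harea
  have main : ∀ d : ℝ, d ∈ ({d1, d2, d3} : Set ℝ) → ¬ (2.1 < d) := by
    intro d hd hbig
    have hE : A < heronArea d1 d2 d3 := by
      rw [heronArea]
      have hlt : A ^ 2 < (d1 + d2 + d3) / 2 * ((d1 + d2 + d3) / 2 - d1) *
          ((d1 + d2 + d3) / 2 - d2) * ((d1 + d2 + d3) / 2 - d3) := by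
        rw [hA2]
        rcases hd with h | h | h
        · subst h
          have hk := key_poly r (d2^2) (d3^2) (d^2) hr hr0 hq2 hq3
            (by nlinarith) hnonobtuse3 (by linarith) (by linarith)
          linarith [hk]
        · subst h
          have hk := key_poly r (d1^2) (d3^2) (d^2) hr hr0 hq1 hq3
            (by nlinarith) hnonobtuse2 (by linarith) (by linarith)
          linarith [hk]
        · simp only [Set.mem_singleton_iff] at h
          subst h
          have hk := key_poly r (d1^2) (d2^2) (d^2) hr hr0 hq1 hq2
            (by nlinarith) hnonobtuse1 (by linarith) (by linarith)
          linarith [hk]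
      calc A = Real.sqrt (A ^ 2) := by rw [Real.sqrt_sq hA0]
        _ < _ := Real.sqrt_lt_sqrt (by positivity) hlt
    exact absurd harea (not_le.2 hE)
  have sqrt8 : (14/5 : ℝ) < Real.sqrt 8 := by
    have : ((14:ℝ)/5) ^ 2 < 8 := by norm_num
    nlinarith [Real.sq_sqrt (by norm_num : (8:ℝ) ≥ 0), Real.sqrt_nonneg (8:ℝ)]
  refine ⟨⟨?_, ?_, ?_⟩, ?_⟩
  · exact not_lt.1 (main d1 (by simp))
  · exact not_lt.1 (main d2 (by simp))
  · exact not_lt.1 (main d3 (by simp))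
  · rw [hc]
    have hm := mul_le_mul (by linarith : ((1:ℝ)+21/10)/4 ≤ (1+r)/4) sqrt8.le
      (by norm_num) (by linarith)
    linarith [hm]
end

section
/- For a nonobtuse triangle, the area is a monotonically nondecreasing function of each edge length: if two nonobtuse triangles have edge lengths (a,b,c) and (a',b',c') with a ≤ a', b ≤ b', c ≤ c', then the area of the first is at most the area of the second. -/
/-!
With `x, y, z` the squared side lengths, Heron's formula reads `16 A² = q(x, y, z)` for the
quadratic form `q = 2xy + 2yz + 2zx - x² - y² - z²`, and the triangle is nonobtuse exactly when
`(x, y, z)` lies in the cone `x ≤ y + z, y ≤ x + z, z ≤ x + y`. Polarising,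
`q p' - q p = ∑ (x' - x) ((y' + z' - x') + (y + z - x))`, which is nonnegative when `p ≤ p'` and
both points lie in the cone. A nonnegative point outside the cone violates exactly one inequality,
say `y + z < x`, and then `q = 4yz - (x - y - z)²` shows that lowering `x` to `y + z` increases
`q` and lands in the cone, still below `p'`.
-/

open Real

/-- Sixteen times the squared area of a triangle with squared side lengths `x`, `y`, `z`. -/
def heronQuadratic (x y z : ℝ) : ℝ :=
  2 * x * y + 2 * y * z + 2 * z * x - x ^ 2 - y ^ 2 - z ^ 2

theorem heronArea_eq_sqrt_heronQuadratic (a b c : ℝ) :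
    heronArea a b c = √(heronQuadratic (a ^ 2) (b ^ 2) (c ^ 2) / 16) := by
  unfold heronArea heronQuadratic
  congr 1
  ring

namespace heronQuadratic

theorem swap_left (x y z : ℝ) : heronQuadratic y x z = heronQuadratic x y z := by
  unfold heronQuadratic
  ring

theorem rotate (x y z : ℝ) : heronQuadratic y z x = heronQuadratic x y z := by
  unfold heronQuadratic
  ring

theorem eq_sub_sq (x y z : ℝ) : heronQuadratic x y z = 4 * y * z - (x - y - z) ^ 2 := by
  unfold heronQuadratic
  ring

theorem sub_eq (x y z x' y' z' : ℝ) :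
    heronQuadratic x' y' z' - heronQuadratic x y z =
      (x' - x) * ((y' + z' - x') + (y + z - x)) + (y' - y) * ((x' + z' - y') + (x + z - y))
        + (z' - z) * ((x' + y' - z') + (x + y - z)) := by
  unfold heronQuadratic
  ring

variable {x y z x' y' z' : ℝ}

theorem le_of_nonobtuse_of_nonobtuse (h₁ : x ≤ y + z) (h₂ : y ≤ x + z) (h₃ : z ≤ x + y)
    (h₁' : x' ≤ y' + z') (h₂' : y' ≤ x' + z') (h₃' : z' ≤ x' + y')
    (hx : x ≤ x') (hy : y ≤ y') (hz : z ≤ z') :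
    heronQuadratic x y z ≤ heronQuadratic x' y' z' := by
  linarith [sub_eq x y z x' y' z',
    mul_nonneg (sub_nonneg.2 hx) (add_nonneg (sub_nonneg.2 h₁') (sub_nonneg.2 h₁)),
    mul_nonneg (sub_nonneg.2 hy) (add_nonneg (sub_nonneg.2 h₂') (sub_nonneg.2 h₂)),
    mul_nonneg (sub_nonneg.2 hz) (add_nonneg (sub_nonneg.2 h₃') (sub_nonneg.2 h₃))]

theorem le_of_add_lt (hy₀ : 0 ≤ y) (hz₀ : 0 ≤ z) (hyz : y + z < x)
    (h₁' : x' ≤ y' + z') (h₂' : y' ≤ x' + z') (h₃' : z' ≤ x' + y')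
    (hx : x ≤ x') (hy : y ≤ y') (hz : z ≤ z') :
    heronQuadratic x y z ≤ heronQuadratic x' y' z' :=
  calc heronQuadratic x y z ≤ heronQuadratic (y + z) y z := by
        rw [eq_sub_sq, eq_sub_sq (y + z)]
        nlinarith
    _ ≤ heronQuadratic x' y' z' :=
        le_of_nonobtuse_of_nonobtuse le_rfl (by linarith) (by linarith) h₁' h₂' h₃'
          (by linarith) hy hz

theorem le_of_nonneg_of_nonobtuse (hx₀ : 0 ≤ x) (hy₀ : 0 ≤ y) (hz₀ : 0 ≤ z)
    (h₁' : x' ≤ y' + z') (h₂' : y' ≤ x' + z') (h₃' : z' ≤ x' + y')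
    (hx : x ≤ x') (hy : y ≤ y') (hz : z ≤ z') :
    heronQuadratic x y z ≤ heronQuadratic x' y' z' := by
  rcases lt_or_ge (y + z) x with h₁ | h₁
  · exact le_of_add_lt hy₀ hz₀ h₁ h₁' h₂' h₃' hx hy hz
  rcases lt_or_ge (x + z) y with h₂ | h₂
  · rw [swap_left y x z, swap_left y' x' z']
    exact le_of_add_lt hx₀ hz₀ h₂ h₂' h₁' (by linarith) hy hx hz
  rcases lt_or_ge (x + y) z with h₃ | h₃
  · rw [rotate z x y, rotate z' x' y']
    exact le_of_add_lt hx₀ hy₀ h₃ h₃' (by linarith) (by linarith) hz hx hy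
  exact le_of_nonobtuse_of_nonobtuse h₁ h₂ h₃ h₁' h₂' h₃' hx hy hz

end heronQuadratic

theorem heronArea_mono_of_nonobtuse_general (a b c a' b' c' : ℝ)
    (hpos : 0 < a ∧ 0 < b ∧ 0 < c)
    (hnonobtuse' : c' ^ 2 ≤ a' ^ 2 + b' ^ 2 ∧ b' ^ 2 ≤ a' ^ 2 + c' ^ 2 ∧
      a' ^ 2 ≤ b' ^ 2 + c' ^ 2)
    (ha : a ≤ a') (hb : b ≤ b') (hc : c ≤ c') :
    heronArea a b c ≤ heronArea a' b' c' := by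
  obtain ⟨ha₀, hb₀, hc₀⟩ := hpos
  obtain ⟨h₃', h₂', h₁'⟩ := hnonobtuse'
  rw [heronArea_eq_sqrt_heronQuadratic, heronArea_eq_sqrt_heronQuadratic]
  gcongr
  exact heronQuadratic.le_of_nonneg_of_nonobtuse (sq_nonneg a) (sq_nonneg b) (sq_nonneg c)
    h₁' h₂' h₃' (by gcongr) (by gcongr) (by gcongr)

theorem heronArea_mono_of_nonobtuse (a b c a' b' c' : ℝ)
    (hpos : 0 < a ∧ 0 < b ∧ 0 < c)
    (htri : c < a + b ∧ b < a + c ∧ a < b + c)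
    (htri' : c' < a' + b' ∧ b' < a' + c' ∧ a' < b' + c')
    (hnonobtuse : c ^ 2 ≤ a ^ 2 + b ^ 2 ∧ b ^ 2 ≤ a ^ 2 + c ^ 2 ∧
      a ^ 2 ≤ b ^ 2 + c ^ 2)
    (hnonobtuse' : c' ^ 2 ≤ a' ^ 2 + b' ^ 2 ∧ b' ^ 2 ≤ a' ^ 2 + c' ^ 2 ∧
      a' ^ 2 ≤ b' ^ 2 + c' ^ 2)
    (ha : a ≤ a') (hb : b ≤ b') (hc : c ≤ c') :
    heronArea a b c ≤ heronArea a' b' c' :=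
  heronArea_mono_of_nonobtuse_general a b c a' b' c' hpos hnonobtuse' ha hb hc
end

section
/- Let κ = cos(π/5). Then area(1.8, 1.8, 2κ) > a_crit + 0.008, where area(d1,d2,d3) is the area of a triangle with the given edge lengths and a_crit = (3/2)·sin(π/5)·κ·(1+κ). -/
/-! Heron's formula for an isosceles triangle gives area `κ * √(1.8 ^ 2 - κ ^ 2)`. Since
`κ = (1 + √5) / 4`, five decimal digits of `κ` and four of `sin (π / 5)` already separate the
two sides, by a margin of about `0.0024`. -/

open Real

theorem heronArea_isosceles (a : ℝ) {h : ℝ} (hh : 0 ≤ h) :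
    heronArea a a (2 * h) = h * √(a ^ 2 - h ^ 2) := by
  rw [heronArea, show (a + a + 2 * h) / 2 * ((a + a + 2 * h) / 2 - a) * ((a + a + 2 * h) / 2 - a)
      * ((a + a + 2 * h) / 2 - 2 * h) = h ^ 2 * (a ^ 2 - h ^ 2) by ring,
    sqrt_mul (sq_nonneg h), sqrt_sq hh]

theorem cos_pi_div_five_mem_Ioo : cos (π / 5) ∈ Set.Ioo 0.80901 0.80902 := by
  have h₁ : (2.23604 : ℝ) < √5 := lt_sqrt (by norm_num) |>.mpr (by norm_num)
  have h₂ : √5 < 2.23608 := (sqrt_lt' (by norm_num)).mpr (by norm_num)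
  rw [cos_pi_div_five]
  constructor <;> linarith

theorem sin_pi_div_five_lt : sin (π / 5) < 0.5878 := by
  have hc := cos_pi_div_five_mem_Ioo.1
  have hsq : sin (π / 5) ^ 2 < 0.5878 ^ 2 := by
    rw [sin_sq]
    nlinarith
  exact lt_of_pow_lt_pow_left₀ 2 (by norm_num) hsq

theorem area_1_8_1_8_2kappa :
    heronArea 1.8 1.8 (2 * Real.cos (π / 5)) >
      (3 / 2) * Real.sin (π / 5) * Real.cos (π / 5) * (1 + Real.cos (π / 5))
        + 0.008 := by
  obtain ⟨hc₁, hc₂⟩ := cos_pi_div_five_mem_Ioo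
  have hs₀ : 0 < sin (π / 5) := sin_pos_of_pos_of_lt_pi (by positivity) (by linarith [pi_pos])
  have hheight : 1.6079 < √(1.8 ^ 2 - cos (π / 5) ^ 2) :=
    lt_sqrt (by norm_num) |>.mpr (by nlinarith)
  rw [heronArea_isosceles _ (by linarith)]
  calc (3 / 2) * sin (π / 5) * cos (π / 5) * (1 + cos (π / 5)) + 0.008
      < (3 / 2) * 0.5878 * 0.80902 * (1 + 0.80902) + 0.008 := by
        gcongr
        exact sin_pi_div_five_lt
    _ < 0.80901 * 1.6079 := by norm_num
    _ < cos (π / 5) * √(1.8 ^ 2 - cos (π / 5) ^ 2) := by gcongr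
end

section
/- Let κ = cos(π/5). The area of a triangle with circumradius 2 and two edges of length 2κ each, with the third edge as long as possible, exceeds 0.968. -/
/-!
An edge of length `d` in a circle of radius `r` subtends the angle `2α` with `sin α = d / (2r)`,
so the third edge `2r sin 2α` of the isosceles triangle has square `d²(4r² - d²)/r²`, and Heron's
formula collapses to `area² = d⁶(4r² - d²)/(16r⁴)`. For `r = 2`, `d = 2κ` this is `κ⁶(4 - κ²)`,
which modulo the minimal polynomial `4κ² - 2κ - 1` of `κ = cos(π/5)` equals `107κ/128 + 67/256`;
the bound `κ > 0.808` then gives `area² > 0.968²`.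
-/

open Real

theorem heronArea_self_self (a c : ℝ) :
    heronArea a a c = √(c ^ 2 * (4 * a ^ 2 - c ^ 2) / 16) := by
  unfold heronArea
  ring_nf

theorem sin_two_mul_arcsin_sq {x : ℝ} (hx : |x| ≤ 1) :
    sin (2 * arcsin x) ^ 2 = 4 * x ^ 2 * (1 - x ^ 2) := by
  obtain ⟨hx₁, hx₂⟩ := abs_le.mp hx
  have hx_sq : x ^ 2 ≤ 1 := by nlinarith
  rw [sin_two_mul, sin_arcsin hx₁ hx₂, cos_arcsin, mul_pow, mul_pow, sq_sqrt (by linarith)]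
  ring

theorem heronArea_inscribed_isosceles {r d : ℝ} (hr : 0 < r) (hd : |d| ≤ 2 * r) :
    heronArea d d (2 * r * sin (2 * arcsin (d / (2 * r)))) =
      √(d ^ 6 * (4 * r ^ 2 - d ^ 2) / (16 * r ^ 4)) := by
  have hx : |d / (2 * r)| ≤ 1 := by
    rw [abs_div, abs_of_pos (by positivity : (0 : ℝ) < 2 * r)]
    exact div_le_one_of_le₀ hd (by positivity)
  have hchord : (2 * r * sin (2 * arcsin (d / (2 * r)))) ^ 2 =
      d ^ 2 * (4 * r ^ 2 - d ^ 2) / r ^ 2 := by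
    rw [mul_pow, sin_two_mul_arcsin_sq hx]
    field_simp
    ring
  rw [heronArea_self_self, hchord]
  congr 1
  field_simp
  ring

theorem lt_cos_pi_div_five_pow_six_mul_four_sub_sq :
    0.968 ^ 2 < cos (π / 5) ^ 6 * (4 - cos (π / 5) ^ 2) := by
  set κ := cos (π / 5)
  have hκ : 4 * κ ^ 2 - 2 * κ - 1 = 0 := quadratic_root_cos_pi_div_five
  have h5 : (2.232 : ℝ) < √5 := by
    rw [lt_sqrt (by norm_num)]
    norm_num
  have hκ_gt : 0.808 < κ := by
    linarith [show κ = (1 + √5) / 4 from cos_pi_div_five]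
  calc (0.968 : ℝ) ^ 2 < 107 / 128 * κ + 67 / 256 := by linarith
    _ = κ ^ 6 * (4 - κ ^ 2) := by
      linear_combination (κ ^ 6 / 4 + κ ^ 5 / 8 - 7 * κ ^ 4 / 8 - 13 * κ ^ 3 / 32
        - 27 * κ ^ 2 / 64 - 5 * κ / 16 - 67 / 256) * hκ

/-- A triangle inscribed in a circle of radius 2 with two edges of length `2κ`
and the third edge as long as possible: each edge of length `2κ` subtends a
central angle `2 arcsin(κ/2)`, and the longest possible third edge has length
`2·2·sin(2·arcsin(κ/2))`.  The area of this triangle exceeds `0.968`. -/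
theorem areaEta_bound :
    let κ : ℝ := Real.cos (π / 5)
    let θ : ℝ := 2 * Real.arcsin (κ / 2)
    heronArea (2 * κ) (2 * κ) (4 * Real.sin θ) > 0.968 := by
  intro κ θ
  have hd : |2 * κ| ≤ 2 * 2 := by
    rw [abs_mul, abs_two]
    linarith [abs_cos_le_one (π / 5)]
  have harea := heronArea_inscribed_isosceles two_pos hd
  rw [show 2 * κ / (2 * 2) = κ / 2 by ring, show (2 : ℝ) * 2 = 4 by norm_num] at harea
  rw [harea, gt_iff_lt, lt_sqrt (by norm_num)]
  convert lt_cos_pi_div_five_pow_six_mul_four_sub_sq using 1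
  ring
end
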